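/- For s > 0, the infinite product ∏_{j=1}^∞ (2^j − 1)/(2^j − 1 + s) equals the series ∑_{j=1}^∞ (−1)^{j−1}·2^j/(2^j − 1 + s)·∏_{l=1}^{j−1} 1/(2^l − 1) (partial fraction expansion). -/

import Mathlib

/-!
Write `a j = 2 ^ (j + 1) - 1`. Lagrange interpolation of the constant `1` at the nodes `-a k`
gives the finite partial fraction expansion
`∏_{j<n} a j / (a j + s) = ∑_{j<n} A n j / (a j + s)`, `A n j = a j ∏_{k<n, k≠j} a k / (a k - a j)`.
Because the nodes are geometric, the coefficients factor as
`A (j + 1 + m) j = c j * ∏_{i ≤ j} (1 - 2⁻¹ ^ (m + i + 1))`, where `c j` is the coefficient of the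
series. Hence `A n j → c j` with `|A n j| ≤ |c j|`, and `∑ |c j| < ∞` by the ratio test
(`c (j + 1) / c j = -2 / a j`), so Tannery's theorem lets the partial products, which converge to
the infinite product, converge also to the series.
-/

open Finset Filter Topology Polynomial

theorem Finset.prod_div_add_eq_sum_div_add {ι F : Type*} [Field F] [DecidableEq ι]
    {t : Finset ι} (ht : t.Nonempty) {b : ι → F} (hb : Set.InjOn b t) {s : F}
    (hs : ∀ i ∈ t, b i + s ≠ 0) :
    ∏ i ∈ t, b i / (b i + s) =
      ∑ i ∈ t, b i * (∏ k ∈ t.erase i, b k / (b k - b i)) / (b i + s) := by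
  have hsum := congrArg (eval s) (Lagrange.sum_basis (v := fun i => -b i)
    (fun i hi j hj h => hb hi hj (neg_injective h)) ht)
  simp only [eval_finsetSum, Lagrange.basis, eval_prod, Lagrange.basisDivisor, eval_mul,
    eval_C, eval_sub, eval_X, eval_one, sub_neg_eq_add] at hsum
  rw [← mul_one (∏ i ∈ t, _), ← hsum, mul_sum]
  refine sum_congr rfl fun i hi => ?_
  rw [← mul_prod_erase t _ hi, mul_assoc, ← prod_mul_distrib, mul_div_right_comm]
  congr 1
  refine prod_congr rfl fun k hk => ?_
  have hbk := hs k (mem_of_mem_erase hk)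
  field_simp
  ring

noncomputable def mersenneSucc (j : ℕ) : ℝ := 2 ^ (j + 1) - 1

noncomputable def partialFractionCoeff (n j : ℕ) : ℝ :=
  mersenneSucc j * ∏ k ∈ (range n).erase j, mersenneSucc k / (mersenneSucc k - mersenneSucc j)

noncomputable def limitCoeff (j : ℕ) : ℝ :=
  (-1) ^ j * 2 ^ (j + 1) * ∏ l ∈ range j, (mersenneSucc l)⁻¹

namespace mersenneSucc

lemma two_pow_le (j : ℕ) : (2 : ℝ) ^ j ≤ mersenneSucc j := by
  rw [mersenneSucc, pow_succ]
  linarith [one_le_pow₀ (M₀ := ℝ) one_le_two (n := j)]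

lemma one_le (j : ℕ) : 1 ≤ mersenneSucc j :=
  (one_le_pow₀ one_le_two).trans (two_pow_le j)

lemma pos (j : ℕ) : 0 < mersenneSucc j := zero_lt_one.trans_le (one_le j)

lemma strictMono : StrictMono mersenneSucc := fun j k h => by
  unfold mersenneSucc
  gcongr
  norm_num

lemma sub_of_lt {k j : ℕ} (h : k < j) :
    mersenneSucc k - mersenneSucc j = -(2 ^ (k + 1) * mersenneSucc (j - 1 - k)) := by
  rw [mersenneSucc, mersenneSucc, mersenneSucc, mul_sub, ← pow_add,
    show k + 1 + (j - 1 - k + 1) = j + 1 by omega]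
  ring

end mersenneSucc

lemma one_sub_inv_two_pow (j : ℕ) : 1 - 2⁻¹ ^ (j + 1) = mersenneSucc j / 2 ^ (j + 1) := by
  rw [mersenneSucc, inv_pow]
  field_simp

lemma partialFractionCoeff_self (j : ℕ) :
    partialFractionCoeff (j + 1) j = limitCoeff j * ∏ i ∈ range (j + 1), (1 - 2⁻¹ ^ (i + 1)) := by
  have hterm : ∀ k ∈ range j, mersenneSucc k / (mersenneSucc k - mersenneSucc j) =
      -(mersenneSucc k * (2 ^ (k + 1))⁻¹ * (mersenneSucc (j - 1 - k))⁻¹) := fun k hk => by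
    rw [mersenneSucc.sub_of_lt (mem_range.1 hk)]
    field_simp
  have hne : ∏ k ∈ range j, mersenneSucc k ≠ 0 :=
    prod_ne_zero_iff.2 fun k _ => (mersenneSucc.pos k).ne'
  rw [partialFractionCoeff, range_add_one, erase_insert notMem_range_self, prod_congr rfl hterm,
    prod_neg, prod_mul_distrib, prod_mul_distrib,
    prod_range_reflect (fun k => (mersenneSucc k)⁻¹), limitCoeff, ← range_add_one,
    prod_congr rfl fun i _ => one_sub_inv_two_pow i, prod_range_succ, prod_div_distrib,
    card_range, prod_inv_distrib, prod_inv_distrib]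
  field_simp

lemma partialFractionCoeff_succ {n j : ℕ} (hj : j < n) :
    partialFractionCoeff (n + 1) j =
      partialFractionCoeff n j * (mersenneSucc n / (mersenneSucc n - mersenneSucc j)) := by
  rw [partialFractionCoeff, partialFractionCoeff, range_add_one, erase_insert_of_ne hj.ne',
    prod_insert (by simp), mul_left_comm, mul_comm (mersenneSucc n / _)]

lemma mersenneSucc_mul_one_sub_inv_two_pow (j m : ℕ) :
    mersenneSucc (j + 1 + m) * (1 - 2⁻¹ ^ (m + 1)) =
      (mersenneSucc (j + 1 + m) - mersenneSucc j) * (1 - 2⁻¹ ^ (m + (j + 1) + 1)) := by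
  simp only [mersenneSucc, inv_pow, show j + 1 + m + 1 = (m + 1) + (j + 1) by ring,
    show m + (j + 1) + 1 = (m + 1) + (j + 1) by ring, pow_add]
  field_simp
  ring

lemma partialFractionCoeff_add (j m : ℕ) :
    partialFractionCoeff (j + 1 + m) j =
      limitCoeff j * ∏ i ∈ range (j + 1), (1 - 2⁻¹ ^ (m + i + 1)) := by
  induction m with
  | zero => simpa using partialFractionCoeff_self j
  | succ m ih =>
    set g : ℕ → ℝ := fun i => 1 - 2⁻¹ ^ (m + i + 1)
    have hshift :
        (∏ i ∈ range (j + 1), g (i + 1)) * g 0 = (∏ i ∈ range (j + 1), g i) * g (j + 1) :=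
      (prod_range_succ' g (j + 1)).symm.trans (prod_range_succ g (j + 1))
    have hg0 : g 0 ≠ 0 := sub_ne_zero.2 (pow_lt_one₀ (by norm_num) (by norm_num) (by omega)).ne'
    have hden : mersenneSucc (j + 1 + m) - mersenneSucc j ≠ 0 :=
      sub_ne_zero.2 (mersenneSucc.strictMono (by omega)).ne'
    have hratio := mersenneSucc_mul_one_sub_inv_two_pow j m
    rw [← add_assoc, partialFractionCoeff_succ (by omega), ih, mul_assoc,
      prod_congr rfl fun i _ =>
        show 1 - 2⁻¹ ^ (m + 1 + i + 1) = g (i + 1) by simp only [g]; ring_nf]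
    congr 1
    apply mul_right_cancel₀ hg0
    rw [hshift, mul_div_assoc', div_mul_eq_mul_div, div_eq_iff hden, mul_assoc, mul_assoc]
    exact congrArg _ (hratio.trans (mul_comm _ _))

lemma prod_range_div_add_eq_sum_partialFractionCoeff {n : ℕ} (hn : 0 < n) {s : ℝ}
    (hs : ∀ j, mersenneSucc j + s ≠ 0) :
    ∏ j ∈ range n, mersenneSucc j / (mersenneSucc j + s) =
      ∑ j ∈ range n, partialFractionCoeff n j / (mersenneSucc j + s) :=
  prod_div_add_eq_sum_div_add (nonempty_range_iff.2 hn.ne')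
    mersenneSucc.strictMono.injective.injOn fun j _ => hs j

lemma abs_partialFractionCoeff_le {n j : ℕ} (hj : j < n) :
    |partialFractionCoeff n j| ≤ |limitCoeff j| := by
  obtain ⟨m, rfl⟩ : ∃ m, n = j + 1 + m := ⟨n - (j + 1), by omega⟩
  have h0 : ∀ k : ℕ, 0 ≤ (2 : ℝ)⁻¹ ^ k := fun k => by positivity
  have h1 : ∀ k : ℕ, (2 : ℝ)⁻¹ ^ k ≤ 1 := fun k => pow_le_one₀ (by norm_num) (by norm_num)
  rw [partialFractionCoeff_add, abs_mul]
  refine mul_le_of_le_one_right (abs_nonneg _) ?_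
  rw [abs_of_nonneg (prod_nonneg fun i _ => sub_nonneg.2 (h1 _))]
  exact prod_le_one (fun i _ => sub_nonneg.2 (h1 _)) fun i _ => sub_le_self _ (h0 _)

lemma tendsto_partialFractionCoeff (j : ℕ) :
    Tendsto (partialFractionCoeff · j) atTop (𝓝 (limitCoeff j)) := by
  have hpow : ∀ i, Tendsto (fun m : ℕ => (2 : ℝ)⁻¹ ^ (m + i + 1)) atTop (𝓝 0) := fun i =>
    (tendsto_pow_atTop_nhds_zero_of_lt_one (by norm_num) (by norm_num)).comp
      (tendsto_add_atTop_nat (i + 1))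
  have hweight := tendsto_finsetProd (range (j + 1)) fun i _ => (hpow i).const_sub 1
  rw [← tendsto_add_atTop_iff_nat (j + 1)]
  simpa [add_comm _ (j + 1), partialFractionCoeff_add] using hweight.const_mul (limitCoeff j)

lemma limitCoeff_succ (j : ℕ) : limitCoeff (j + 1) = -2 / mersenneSucc j * limitCoeff j := by
  simp only [limitCoeff, prod_range_succ, pow_succ]
  ring

lemma summable_limitCoeff : Summable limitCoeff := by
  refine summable_of_ratio_norm_eventually_le (r := 2 / 3) (by norm_num) ?_
  filter_upwards [eventually_ge_atTop 1] with j hj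
  have h3 : 3 ≤ mersenneSucc j :=
    le_trans (by norm_num [mersenneSucc]) (mersenneSucc.strictMono.monotone hj)
  rw [limitCoeff_succ, norm_mul, norm_div, norm_neg, Real.norm_two,
    Real.norm_of_nonneg (by linarith)]
  gcongr

lemma tendsto_sum_partialFractionCoeff_div {s : ℝ} (hs : 0 ≤ s) :
    Tendsto (fun n => ∑ j ∈ range n, partialFractionCoeff n j / (mersenneSucc j + s)) atTop
      (𝓝 (∑' j, limitCoeff j / (mersenneSucc j + s))) := by
  have hden : ∀ j, 1 ≤ |mersenneSucc j + s| := fun j => by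
    rw [abs_of_pos (by linarith [mersenneSucc.pos j])]
    linarith [mersenneSucc.one_le j]
  refine (tendsto_tsum_of_dominated_convergence (bound := fun j => |limitCoeff j|)
    (f := fun n => Set.indicator (range n : Set ℕ) fun j =>
      partialFractionCoeff n j / (mersenneSucc j + s))
    summable_limitCoeff.abs (fun j => ?_) (Eventually.of_forall fun n j => ?_)).congr
    fun n => (sum_eq_tsum_indicator _ _).symm
  · refine ((tendsto_partialFractionCoeff j).div_const _).congr' ?_
    filter_upwards [eventually_gt_atTop j] with n hn
    rw [Set.indicator_of_mem (mem_coe.2 (mem_range.2 hn))]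
  · by_cases hj : j < n
    · rw [Set.indicator_of_mem (mem_coe.2 (mem_range.2 hj)), Real.norm_eq_abs, abs_div]
      exact (div_le_self (abs_nonneg _) (hden j)).trans (abs_partialFractionCoeff_le hj)
    · rw [Set.indicator_of_notMem (mt (mem_range.1 ∘ mem_coe.1) hj), norm_zero]
      exact abs_nonneg _

lemma multipliable_mersenneSucc_div_add {s : ℝ} (hs : 0 ≤ s) :
    Multipliable fun j => mersenneSucc j / (mersenneSucc j + s) := by
  have hpos : ∀ j, 0 < mersenneSucc j + s := fun j =>
    add_pos_of_pos_of_nonneg (mersenneSucc.pos j) hs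
  have hsum : Summable fun j => s / (mersenneSucc j + s) := by
    refine Summable.of_nonneg_of_le (fun j => div_nonneg hs (hpos j).le) (fun j => ?_)
      ((summable_geometric_of_lt_one (by norm_num) (by norm_num : (2 : ℝ)⁻¹ < 1)).mul_left s)
    rw [inv_pow, ← div_eq_mul_inv]
    exact div_le_div_of_nonneg_left hs (by positivity)
      ((mersenneSucc.two_pow_le j).trans (by linarith))
  refine (Real.multipliable_one_add_of_summable hsum.neg).congr fun j => ?_
  field_simp [(hpos j).ne']
  ring

theorem product_eq_partial_fractions (s : ℝ) (hs : 0 < s) :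
    ∏' j : ℕ, ((2 : ℝ) ^ (j + 1) - 1) / ((2 : ℝ) ^ (j + 1) - 1 + s) =
      ∑' j : ℕ, (-1 : ℝ) ^ j * 2 ^ (j + 1) / ((2 : ℝ) ^ (j + 1) - 1 + s) *
        ∏ l ∈ Finset.range j, ((2 : ℝ) ^ (l + 1) - 1)⁻¹ := by
  have hprod := (multipliable_mersenneSucc_div_add hs.le).hasProd.tendsto_prod_nat
  have hsum := (tendsto_sum_partialFractionCoeff_div hs.le).congr' <|
    (eventually_gt_atTop 0).mono fun n hn => (prod_range_div_add_eq_sum_partialFractionCoeff hn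
      fun j => (add_pos (mersenneSucc.pos j) hs).ne').symm
  refine (tendsto_nhds_unique hprod hsum).trans (tsum_congr fun j => ?_)
  rw [limitCoeff, mul_div_right_comm]
  rfl
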